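/- Let Φ' be a completely positive map on matrices over a finite-dimensional Hilbert space whose Heisenberg-picture adjoint satisfies Φ'*(I) = E where E is a rank-one positive operator. Then there exists a state ξ such that Φ'(ρ) = tr(ρE)·ξ for all ρ. -/

import Mathlib

/-!
Let `t = tr E` and `Q = t - E`. Since `E` has rank one, `E ρ E = tr(ρE) E` for every `ρ`; in
particular `E² = tE`, so `QE = 0` and `tr Φ(Q²) = tr(Q²E) = 0`, and the positive matrix `Φ(Q²)`
vanishes. Positivity of `Φ ⊗ id₂` on the block matrix `[A; Q] [A; Q]*` then forces
`Φ(AQ) = Φ(QA*) = 0` for all `A`. Expanding `t² ρ = (Q + E) ρ (Q + E)` leaves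
`t² Φ(ρ) = Φ(EρE) = tr(ρE) Φ(E)`, so `ξ = Φ(E) / t²`.
-/

open Matrix ComplexOrder
open scoped Kronecker

noncomputable section

/-- `n × n` complex matrices, modelling operators on an `n`-dimensional Hilbert space. -/
abbrev Mat (n : ℕ) := Matrix (Fin n) (Fin n) ℂ

/-- An effect: an operator `E` with `0 ≤ E ≤ I` in the Loewner order. -/
def IsEffect {n : ℕ} (E : Mat n) : Prop := E.PosSemidef ∧ ((1 : Mat n) - E).PosSemidef

/-- The extension `Φ ⊗ id_k` of a map between matrix algebras, acting on block matrices. -/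
def cpExt {m n : ℕ} (Φ : Mat m →ₗ[ℂ] Mat n) (k : ℕ)
    (M : Matrix (Fin m × Fin k) (Fin m × Fin k) ℂ) :
    Matrix (Fin n × Fin k) (Fin n × Fin k) ℂ :=
  Matrix.of fun p q => Φ (Matrix.of fun a b => M (a, p.2) (b, q.2)) p.1 q.1

/-- Complete positivity of a linear map between matrix algebras. -/
def IsCP {m n : ℕ} (Φ : Mat m →ₗ[ℂ] Mat n) : Prop :=
  ∀ (k : ℕ) (M : Matrix (Fin m × Fin k) (Fin m × Fin k) ℂ),
    M.PosSemidef → (cpExt Φ k M).PosSemidef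

namespace Matrix

variable {K : Type*} [Field K]

theorem exists_eq_vecMulVec_of_rank_le_one {m n : Type*} [Fintype m] [Fintype n]
    {A : Matrix m n K} (hA : A.rank ≤ 1) : ∃ (u : m → K) (w : n → K), A = vecMulVec u w := by
  rw [rank_eq_finrank_span_cols, finrank_le_one_iff] at hA
  obtain ⟨u, hu⟩ := hA
  choose w hw using fun j => hu ⟨A.col j, Submodule.subset_span (Set.mem_range_self j)⟩
  refine ⟨u, w, ?_⟩
  ext i j
  have := congrArg (fun x : Submodule.span K (Set.range A.col) => (x : m → K) i) (hw j)
  simpa [vecMulVec_apply, mul_comm] using this.symm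

theorem mul_mul_eq_trace_mul_smul_of_rank_le_one {n : Type*} [Fintype n] {A : Matrix n n K}
    (hA : A.rank ≤ 1) (ρ : Matrix n n K) : A * ρ * A = (ρ * A).trace • A := by
  obtain ⟨u, w, rfl⟩ := exists_eq_vecMulVec_of_rank_le_one hA
  rw [Matrix.mul_assoc, mul_vecMulVec ρ, vecMulVec_mul_vecMulVec, trace_vecMulVec,
    vecMulVec_smul, dotProduct_comm]

theorem mul_self_eq_trace_smul_of_rank_le_one {n : Type*} [Fintype n] [DecidableEq n]
    {A : Matrix n n K} (hA : A.rank ≤ 1) : A * A = A.trace • A := by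
  simpa using A.mul_mul_eq_trace_mul_smul_of_rank_le_one hA 1

end Matrix

namespace Matrix.PosSemidef

variable {ι 𝕜 : Type*} [Fintype ι] [RCLike 𝕜] {A : Matrix ι ι 𝕜}

theorem apply_eq_zero_of_diag_eq_zero (hA : A.PosSemidef) {j : ι} (h : A j j = 0) (i : ι) :
    A i j = 0 := by
  classical
  have := (hA.dotProduct_mulVec_zero_iff (Pi.single j 1)).mp (by simpa [mulVec_single] using h)
  simpa [mulVec_single] using congrFun this i

theorem apply_eq_zero_of_diag_eq_zero' (hA : A.PosSemidef) {j : ι} (h : A j j = 0) (i : ι) :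
    A j i = 0 := by
  rw [← hA.1.apply j i, hA.apply_eq_zero_of_diag_eq_zero h, star_zero]

end Matrix.PosSemidef

namespace IsCP

variable {n m : ℕ} {Φ : Mat n →ₗ[ℂ] Mat m}

theorem posSemidef_apply (hΦ : IsCP Φ) {ρ : Mat n} (hρ : ρ.PosSemidef) : (Φ ρ).PosSemidef := by
  have h := hΦ 1 _ (hρ.submatrix Prod.fst)
  exact h.submatrix fun i => (i, 0)

theorem posSemidef_apply_mul_conjTranspose_blocks (hΦ : IsCP Φ) {k : ℕ} {ι : Type*} [Fintype ι]
    (X : Fin k → Matrix (Fin n) ι ℂ) :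
    (Matrix.of fun p q : Fin m × Fin k => Φ (X p.2 * (X q.2)ᴴ) p.1 q.1).PosSemidef := by
  let W : Matrix (Fin n × Fin k) ι ℂ := Matrix.of fun a j => X a.2 a.1 j
  exact hΦ k _ (posSemidef_self_mul_conjTranspose W)

theorem apply_mul_conjTranspose_eq_zero_right (hΦ : IsCP Φ) {ι : Type*} [Fintype ι]
    {B : Matrix (Fin n) ι ℂ} (hB : Φ (B * Bᴴ) = 0) (A : Matrix (Fin n) ι ℂ) :
    Φ (A * Bᴴ) = 0 := by
  have h := hΦ.posSemidef_apply_mul_conjTranspose_blocks ![A, B]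
  ext p q
  exact h.apply_eq_zero_of_diag_eq_zero (j := (q, 1)) (by simp [hB]) (p, 0)

theorem apply_mul_conjTranspose_eq_zero_left (hΦ : IsCP Φ) {ι : Type*} [Fintype ι]
    {B : Matrix (Fin n) ι ℂ} (hB : Φ (B * Bᴴ) = 0) (A : Matrix (Fin n) ι ℂ) :
    Φ (B * Aᴴ) = 0 := by
  have h := hΦ.posSemidef_apply_mul_conjTranspose_blocks ![A, B]
  ext p q
  exact h.apply_eq_zero_of_diag_eq_zero' (j := (p, 1)) (by simp [hB]) (q, 0)

theorem trace_sq_smul_apply (hΦ : IsCP Φ) {E : Mat n} (hE : E.IsHermitian) (hrank : E.rank ≤ 1)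
    (htr : ∀ ρ : Mat n, (Φ ρ).trace = (ρ * E).trace) (ρ : Mat n) :
    E.trace ^ 2 • Φ ρ = (ρ * E).trace • Φ E := by
  set t := E.trace
  set Q : Mat n := t • 1 - E
  have hQ : Qᴴ = Q := by
    simp [Q, conjTranspose_sub, hE.eq, t, ← trace_conjTranspose]
  have hQE : Q * E = 0 := by simp [Q, sub_mul, mul_self_eq_trace_smul_of_rank_le_one hrank, t]
  have hΦQ : Φ (Q * Qᴴ) = 0 :=
    ((hΦ.posSemidef_apply (posSemidef_self_mul_conjTranspose Q)).trace_eq_zero_iff).mp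
      (by rw [htr, hQ, Matrix.mul_assoc, hQE, Matrix.mul_zero, trace_zero])
  have hleft : ∀ A, Φ (Q * A) = 0 := fun A => by
    simpa [hQ] using hΦ.apply_mul_conjTranspose_eq_zero_left hΦQ Aᴴ
  have hright : ∀ A, Φ (A * Q) = 0 := fun A => by
    simpa [hQ] using hΦ.apply_mul_conjTranspose_eq_zero_right hΦQ A
  calc t ^ 2 • Φ ρ = Φ ((Q + E) * ρ * (Q + E)) := by
        rw [← map_smul, sub_add_cancel]
        simp [smul_smul, sq]
    _ = Φ (Q * (ρ * (Q + E))) + Φ (E * ρ * Q) + Φ (E * ρ * E) := by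
        rw [Matrix.add_mul Q E ρ, Matrix.add_mul (Q * ρ), Matrix.mul_add (E * ρ),
          Matrix.mul_assoc Q, map_add, map_add, add_assoc]
    _ = (ρ * E).trace • Φ E := by
        rw [hleft, hright, E.mul_mul_eq_trace_mul_smul_of_rank_le_one hrank, map_smul, zero_add,
          zero_add]

end IsCP

/-- A completely positive map whose Heisenberg adjoint sends `I` to a rank-one positive
operator `E` is of the form `ρ ↦ tr(ρE)·ξ` for a fixed state `ξ`. -/
theorem cp_map_rank_one_adjoint_unit {n m : ℕ}
    (Φ : Mat n →ₗ[ℂ] Mat m) (hΦ : IsCP Φ)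
    (E : Mat n) (hEpos : E.PosSemidef) (hrank : E.rank = 1)
    (htr : ∀ ρ : Mat n, (Φ ρ).trace = (ρ * E).trace) :
    ∃ ξ : Mat m, ξ.PosSemidef ∧ ξ.trace = 1 ∧
      ∀ ρ : Mat n, Φ ρ = (ρ * E).trace • ξ := by
  have htrace : E.trace ≠ 0 := fun h => by
    simp [hEpos.trace_eq_zero_iff.mp h, rank_zero] at hrank
  refine ⟨(E.trace ^ 2)⁻¹ • Φ E, ?_, ?_, fun ρ => ?_⟩
  · exact (hΦ.posSemidef_apply hEpos).smul (inv_nonneg.mpr (pow_nonneg hEpos.trace_nonneg 2))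
  · rw [trace_smul, htr, mul_self_eq_trace_smul_of_rank_le_one hrank.le, trace_smul, smul_eq_mul,
      smul_eq_mul, ← sq, inv_mul_cancel₀ (pow_ne_zero 2 htrace)]
  · rw [smul_smul, mul_comm, ← smul_smul, ← hΦ.trace_sq_smul_apply hEpos.1 hrank.le htr ρ,
      smul_smul, inv_mul_cancel₀ (pow_ne_zero 2 htrace), one_smul]
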